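/- Let g be an automorphism of a complex torus V/Λ of the form g(v) = A·v + a where A = diag(α, β) is diagonalizable and g has finite order. If some power g^k with 0 < k < ord(g) has a fixed point and α = 1, then the fixed point set of g^k contains a translate of a one-dimensional subtorus; in particular the fixed locus of ⟨g⟩ is not finite. -/
import Mathlib

private lemma iter_formula (α β : ℂ) (a : Fin 2 → ℂ) (g : (Fin 2 → ℂ) → (Fin 2 → ℂ))
    (hg : ∀ v, g v = fun i => (![α, β] i) * v i + a i) :
    ∀ (n : ℕ) (v w : Fin 2 → ℂ),
      g^[n] (v + w) = fun i => g^[n] v i + (![α, β] i) ^ n * w i := by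
  intro n
  induction n with
  | zero => intro v w; funext i; simp
  | succ n ih =>
    intro v w
    rw [Function.iterate_succ_apply', Function.iterate_succ_apply', ih, hg, hg]
    funext i
    simp only [pow_succ]
    ring

/-- an automorphism `g v = A v + a` of a complex torus `Y = ℂ²/Λ`
with diagonal linear part `A = diag(α, β)`, finite order `I` on `Y`, such that
some power `g^k` (`0 < k < I`) has a fixed point on `Y` and `α = 1`, has the
property that the fixed point set of `g^k` on `Y` contains a translate of a
one-dimensional subtorus; in particular the fixed locus of `⟨g⟩` is not finite. -/
theorem fixed_locus_infinite_of_eigenvalue_one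
    (Λ : AddSubgroup (Fin 2 → ℂ)) (hdisc : DiscreteTopology Λ)
    (hrankΛ : Module.finrank ℤ Λ = 4)
    (α β : ℂ) (a : Fin 2 → ℂ)
    (g : (Fin 2 → ℂ) → (Fin 2 → ℂ))
    (hg : ∀ v, g v = fun i => (![α, β] i) * v i + a i)
    -- the linear part preserves Λ, so that `g` descends to the torus `Y = ℂ²/Λ`
    (hlin : ∀ l ∈ Λ, (fun i => (![α, β] i) * l i) ∈ Λ)
    -- `g` has finite order `I` as an automorphism of `Y`
    (I : ℕ) (hI : 0 < I) (hord : ∀ v, g^[I] v - v ∈ Λ)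
    (k : ℕ) (hk0 : 0 < k) (hkI : k < I)
    -- `g^k` has a fixed point on `Y`
    (hfix : ∃ p, g^[k] p - p ∈ Λ)
    (hα : α = 1) :
    (∃ (W : Submodule ℂ (Fin 2 → ℂ)) (p : Fin 2 → ℂ),
        Module.finrank ℂ W = 1 ∧ ∀ w ∈ W, g^[k] (p + w) - (p + w) ∈ Λ) ∧
    Set.Infinite {y : (Fin 2 → ℂ) ⧸ Λ |
        ∃ v : Fin 2 → ℂ, (QuotientAddGroup.mk v : (Fin 2 → ℂ) ⧸ Λ) = y ∧
          g^[k] v - v ∈ Λ} ∧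
    Set.Infinite {y : (Fin 2 → ℂ) ⧸ Λ |
        ∃ v : Fin 2 → ℂ, (QuotientAddGroup.mk v : (Fin 2 → ℂ) ⧸ Λ) = y ∧
          ∃ m, 0 < m ∧ m < I ∧ g^[m] v - v ∈ Λ} := by
  obtain ⟨p, hp⟩ := hfix
  set e₀ : Fin 2 → ℂ := ![1, 0] with he₀def
  have he₀ : e₀ ≠ 0 := by
    intro h
    have := congrFun h 0
    simp [he₀def] at this
  -- key computation: `g^[k]` moves every point of `p + ℂ e₀` by the same vector
  have key : ∀ t : ℂ, g^[k] (p + t • e₀) - (p + t • e₀) = g^[k] p - p := by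
    intro t
    rw [iter_formula α β a g hg k p (t • e₀)]
    funext i
    simp only [Pi.sub_apply, Pi.add_apply, Pi.smul_apply, smul_eq_mul]
    fin_cases i
    · simp [he₀def, hα]
    · simp [he₀def]
  have hmem : ∀ t : ℂ, g^[k] (p + t • e₀) - (p + t • e₀) ∈ Λ := fun t => (key t) ▸ hp
  -- Λ is countable (discrete subset of a second countable space)
  haveI := hdisc
  haveI : Countable Λ := countable_of_Lindelof_of_discrete
  set f : ℂ → (Fin 2 → ℂ) ⧸ Λ := fun t => QuotientAddGroup.mk (p + t • e₀) with hfdef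
  have hTc : {t : ℂ | t • e₀ ∈ Λ}.Countable := by
    have hsub : {t : ℂ | t • e₀ ∈ Λ} ⊆ Set.range (fun l : Λ => (l : Fin 2 → ℂ) 0) := by
      intro t ht
      exact ⟨⟨t • e₀, ht⟩, by simp [he₀def]⟩
    exact (Set.countable_range _).mono hsub
  have h2 : Set.Infinite {y : (Fin 2 → ℂ) ⧸ Λ |
      ∃ v : Fin 2 → ℂ, (QuotientAddGroup.mk v : (Fin 2 → ℂ) ⧸ Λ) = y ∧
        g^[k] v - v ∈ Λ} := by
    intro hfin
    have hrange : (Set.range f).Finite := by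
      apply hfin.subset
      rintro y ⟨t, rfl⟩
      exact ⟨p + t • e₀, rfl, hmem t⟩
    have huniv : (Set.univ : Set ℂ).Countable := by
      have heq : (Set.univ : Set ℂ) = ⋃ y ∈ Set.range f, f ⁻¹' {y} := by
        ext t; simp
      rw [heq]
      apply hrange.countable.biUnion
      rintro y ⟨t₀, rfl⟩
      have hsub : f ⁻¹' {f t₀} ⊆ (fun s => s + t₀) '' {t : ℂ | t • e₀ ∈ Λ} := by
        intro t ht
        have hmem' : (-(p + t₀ • e₀) + (p + t • e₀)) ∈ Λ := by
          rw [← QuotientAddGroup.eq]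
          exact ht.symm
        have h' : (t - t₀) • e₀ ∈ Λ := by
          convert hmem' using 1
          module
        exact ⟨t - t₀, h', by ring⟩
      exact (hTc.image _).mono hsub
    have hcC : Countable ℂ := Set.countable_univ_iff.mp huniv
    have hcR : Countable ℝ := Complex.ofReal_injective.countable
    exact Uncountable.not_countable hcR
  refine ⟨⟨Submodule.span ℂ {e₀}, p, finrank_span_singleton he₀, ?_⟩, h2, ?_⟩
  · intro w hw
    obtain ⟨t, rfl⟩ := Submodule.mem_span_singleton.mp hw
    exact hmem t
  · apply h2.mono
    rintro y ⟨v, hv, hvfix⟩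
    exact ⟨v, hv, k, hk0, hkI, hvfix⟩
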